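/- arXiv:2601.11155 — 2 statements merged into one kernel-verified Lean document; each statement's English description precedes it below -/
import Mathlib

section
/- For every r > 0 one has i₀(r)·i₁'(r) - i₀'(r)·i₁(r) > 0, i.e. the ratio i₁/i₀ of modified spherical Bessel functions of the first kind is strictly increasing on (0,∞). -/
/-!
Since `i₀' = i₁` and `i₁' = i₀ - 2 i₁ / r`, the Wronskian `i₀ i₁' - i₀' i₁` equals
`(sinh² r - r²) / r⁴`, which is positive because `sinh r > r` for `r > 0`.
-/

noncomputable def i0 : ℝ → ℝ := fun r => Real.sinh r / r

noncomputable def i1 : ℝ → ℝ := fun r => (r * Real.cosh r - Real.sinh r) / r ^ 2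

open Real

lemma hasDerivAt_i0 {r : ℝ} (hr : r ≠ 0) : HasDerivAt i0 (i1 r) r := by
  refine ((hasDerivAt_sinh r).div (hasDerivAt_id' r) hr).congr_deriv ?_
  simp only [i1]
  ring

lemma hasDerivAt_i1 {r : ℝ} (hr : r ≠ 0) : HasDerivAt i1 (i0 r - 2 * i1 r / r) r := by
  have hnum : HasDerivAt (fun r => r * cosh r - sinh r) (r * sinh r) r := by
    refine (((hasDerivAt_id' r).mul (hasDerivAt_cosh r)).sub (hasDerivAt_sinh r)).congr_deriv ?_
    ring
  refine (hnum.div (hasDerivAt_pow 2 r) (pow_ne_zero 2 hr)).congr_deriv ?_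
  simp only [i0, i1]
  field_simp
  ring

lemma i0_mul_deriv_i1_sub_i1_sq {r : ℝ} (hr : r ≠ 0) :
    i0 r * (i0 r - 2 * i1 r / r) - i1 r * i1 r = (sinh r ^ 2 - r ^ 2) / r ^ 4 := by
  simp only [i0, i1]
  field_simp
  linear_combination (-r ^ 2) * cosh_sq r

theorem stmt_4 : ∀ r : ℝ, 0 < r →
    0 < i0 r * deriv i1 r - deriv i0 r * i1 r := by
  intro r hr
  rw [(hasDerivAt_i0 hr.ne').deriv, (hasDerivAt_i1 hr.ne').deriv,
    i0_mul_deriv_i1_sub_i1_sq hr.ne']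
  have hsinh : r < sinh r := self_lt_sinh_iff.mpr hr
  exact div_pos (by nlinarith) (by positivity)
end

section
/- Let A, B, λ₊, λ₋, L > 0 and suppose S_I ∈ ℝ satisfies -B·tanh(λ₋·L/2) < S_I < A·tanh(λ₊·L/2). Then there exists q* ∈ (0, L/2) such that A·tanh(λ₊·(L/2 - q*)) - B·tanh(λ₋·q*) - S_I = 0. -/
theorem stmt_14 (A B lp lm L SI : ℝ) (hA : 0 < A) (hB : 0 < B)
    (hlp : 0 < lp) (hlm : 0 < lm) (hL : 0 < L)
    (hSI₁ : -B * Real.tanh (lm * (L / 2)) < SI)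
    (hSI₂ : SI < A * Real.tanh (lp * (L / 2))) :
    ∃ q ∈ Set.Ioo 0 (L / 2),
      A * Real.tanh (lp * (L / 2 - q)) - B * Real.tanh (lm * q) - SI = 0 := by
  set f : ℝ → ℝ := fun q => A * Real.tanh (lp * (L / 2 - q)) - B * Real.tanh (lm * q) - SI with hf
  have hcont : ContinuousOn f (Set.Icc 0 (L / 2)) := by
    apply Continuous.continuousOn
    have htanh : Continuous Real.tanh := by
      have : Real.tanh = fun x => Real.sinh x / Real.cosh x := funext Real.tanh_eq_sinh_div_cosh
      rw [this]
      exact Real.continuous_sinh.div Real.continuous_cosh fun x => (Real.cosh_pos x).ne'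
    exact ((continuous_const.mul (htanh.comp (by continuity))).sub
      (continuous_const.mul (htanh.comp (by continuity)))).sub continuous_const
  have hab : (0 : ℝ) ≤ L / 2 := by linarith
  have h0 : f 0 = A * Real.tanh (lp * (L / 2)) - SI := by
    simp [hf, Real.tanh_zero]
  have h1 : f (L / 2) = -B * Real.tanh (lm * (L / 2)) - SI := by
    simp only [hf]
    rw [show L / 2 - L / 2 = 0 by ring, mul_zero, Real.tanh_zero]
    ring
  have hmem : (0 : ℝ) ∈ Set.Ioo (f (L / 2)) (f 0) := by
    constructor <;> [rw [h1]; rw [h0]] <;> linarith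
  have := intermediate_value_Ioo' hab hcont hmem
  obtain ⟨q, hq, hfq⟩ := this
  exact ⟨q, hq, hfq⟩
end
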